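/- arXiv:2206.02599 — 3 statements merged into one kernel-verified Lean document; each statement's English description precedes it below -/
import Mathlib

section
/- Let α : [0,∞) → [0,∞) be a differentiable, strictly increasing bijection with α(0) = 0, and suppose there exist constants 0 < c ≤ C and T ≥ 0 such that c ≤ α'(t) ≤ C for all t ≥ T. Let β₁ : [0,∞) → (0,∞) be antitone (weakly decreasing), and let β₂ : [0,∞) → (0,∞) satisfy m·β₁(α(t)) ≤ β₂(t) ≤ M·β₁(α(t)) for all sufficiently large t, with constants 0 < m ≤ M. Then there exist constants C₁, C₂ > 0 and K₁, K₂ > 0 such that β₂(t) ≤ K₁·β₁(C₁ t) and β₁(t) ≤ K₂·β₂(C₂ t) for all sufficiently large t. (Hence any two essential convergence rates of the same equivalence class of ODEs agree up to linear rescalings of time.) -/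
/-!
Past the time `T` the derivative bounds squeeze `α` between two lines through the origin,
`(c/2) t ≤ α t ≤ 2C t` for large `t`. Since `β₁` is antitone, `β₂(t) ≤ M β₁(α t) ≤ M β₁(c t / 2)`,
and, evaluating the comparison at `s = t / (2C)`, `β₁(t) ≤ β₁(α s) ≤ β₂(s) / m`.
-/

open Filter Set

lemma eventually_mul_le_of_le_deriv {f : ℝ → ℝ} (hf : Differentiable ℝ f) {c c' T : ℝ}
    (hc' : c' < c) (hderiv : ∀ t ≥ T, c ≤ deriv f t) : ∀ᶠ t in atTop, c' * t ≤ f t := by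
  have hgrowth : ∀ t ≥ T, c * (t - T) ≤ f t - f T := fun t ht =>
    (convex_Ici T).mul_sub_le_image_sub_of_le_deriv hf.continuous.continuousOn
      hf.differentiableOn (fun x hx => hderiv x (interior_subset hx)) T self_mem_Ici t ht ht
  have hgap : ∀ᶠ t in atTop, c * T - f T ≤ (c - c') * t :=
    (tendsto_id.const_mul_atTop (sub_pos.2 hc')).eventually_ge_atTop _
  filter_upwards [hgap, eventually_ge_atTop T] with t hgap ht
  linarith [hgrowth t ht]

lemma eventually_le_mul_of_deriv_le {f : ℝ → ℝ} (hf : Differentiable ℝ f) {C C' T : ℝ}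
    (hC' : C < C') (hderiv : ∀ t ≥ T, deriv f t ≤ C) : ∀ᶠ t in atTop, f t ≤ C' * t := by
  have hneg : ∀ t ≥ T, -C ≤ deriv (-f) t := fun t ht => by
    rw [deriv.neg]
    exact neg_le_neg (hderiv t ht)
  filter_upwards [eventually_mul_le_of_le_deriv hf.neg (neg_lt_neg hC') hneg] with t ht
  linarith [Pi.neg_apply f t]

theorem essential_rate_well_defined_general
    (α : ℝ → ℝ) (hdiff : Differentiable ℝ α)
    (c C T : ℝ) (hc : 0 < c) (hcC : c ≤ C)
    (hder : ∀ t ≥ T, c ≤ deriv α t ∧ deriv α t ≤ C)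
    (β₁ β₂ : ℝ → ℝ)
    (hβ₁anti : AntitoneOn β₁ (Set.Ici 0))
    (m M : ℝ) (hm : 0 < m) (hmM : m ≤ M)
    (hcomp : ∀ᶠ t in Filter.atTop, m * β₁ (α t) ≤ β₂ t ∧ β₂ t ≤ M * β₁ (α t)) :
    ∃ C₁ > (0 : ℝ), ∃ C₂ > (0 : ℝ), ∃ K₁ > (0 : ℝ), ∃ K₂ > (0 : ℝ),
      (∀ᶠ t in Filter.atTop, β₂ t ≤ K₁ * β₁ (C₁ * t)) ∧
      (∀ᶠ t in Filter.atTop, β₁ t ≤ K₂ * β₂ (C₂ * t)) := by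
  have hC : 0 < C := hc.trans_le hcC
  have hlow : ∀ᶠ t in atTop, c / 2 * t ≤ α t :=
    eventually_mul_le_of_le_deriv hdiff (half_lt_self hc) fun t ht => (hder t ht).1
  have hup : ∀ᶠ t in atTop, α t ≤ 2 * C * t :=
    eventually_le_mul_of_deriv_le hdiff (by linarith) fun t ht => (hder t ht).2
  refine ⟨c / 2, half_pos hc, (2 * C)⁻¹, by positivity, M, hm.trans_le hmM, m⁻¹, inv_pos.2 hm,
    ?_, ?_⟩
  · filter_upwards [hcomp, hlow, eventually_ge_atTop 0] with t ⟨_, hβ₂⟩ hαt ht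
    have hct : 0 ≤ c / 2 * t := by positivity
    calc β₂ t ≤ M * β₁ (α t) := hβ₂
      _ ≤ M * β₁ (c / 2 * t) :=
        mul_le_mul_of_nonneg_left (hβ₁anti hct (hct.trans hαt) hαt) (hm.le.trans hmM)
  · have hs : Tendsto (fun t => (2 * C)⁻¹ * t) atTop atTop :=
      tendsto_id.const_mul_atTop (by positivity)
    filter_upwards [hs.eventually hcomp, hs.eventually hlow, hs.eventually hup,
      eventually_ge_atTop 0] with t ⟨hβ₂, _⟩ hαlow hαup ht
    set s := (2 * C)⁻¹ * t
    have hαs : 0 ≤ α s := le_trans (by positivity) hαlow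
    have hαst : α s ≤ t := by
      calc α s ≤ 2 * C * s := hαup
        _ = t := by simp only [s]; field_simp
    calc β₁ t ≤ β₁ (α s) := hβ₁anti hαs (hαs.trans hαst) hαst
      _ ≤ m⁻¹ * β₂ s := by rw [inv_mul_eq_div, le_div_iff₀ hm, mul_comm]; exact hβ₂

/-- Well-definedness of the essential convergence rate: if `α` is a differentiable,
strictly increasing bijection of `[0,∞)` onto itself with `α 0 = 0` and
`c ≤ α' ≤ C` for `t ≥ T` (`0 < c ≤ C`), `β₁` is a positive antitone rate, and
`β₂(t) = Θ(β₁(α t))` (i.e. `m β₁(α t) ≤ β₂ t ≤ M β₁(α t)` eventually), then the two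
rates agree up to linear rescalings of time: `β₂(t) ≤ K₁ β₁(C₁ t)` and
`β₁(t) ≤ K₂ β₂(C₂ t)` for all sufficiently large `t`. -/
theorem essential_rate_well_defined
    (α : ℝ → ℝ) (hdiff : Differentiable ℝ α) (h0 : α 0 = 0)
    (hmono : StrictMonoOn α (Set.Ici 0))
    (hbij : Set.BijOn α (Set.Ici 0) (Set.Ici 0))
    (c C T : ℝ) (hc : 0 < c) (hcC : c ≤ C) (hT : 0 ≤ T)
    (hder : ∀ t ≥ T, c ≤ deriv α t ∧ deriv α t ≤ C)
    (β₁ β₂ : ℝ → ℝ)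
    (hβ₁pos : ∀ t ≥ (0 : ℝ), 0 < β₁ t) (hβ₂pos : ∀ t ≥ (0 : ℝ), 0 < β₂ t)
    (hβ₁anti : AntitoneOn β₁ (Set.Ici 0))
    (m M : ℝ) (hm : 0 < m) (hmM : m ≤ M)
    (hcomp : ∀ᶠ t in Filter.atTop, m * β₁ (α t) ≤ β₂ t ∧ β₂ t ≤ M * β₁ (α t)) :
    ∃ C₁ > (0 : ℝ), ∃ C₂ > (0 : ℝ), ∃ K₁ > (0 : ℝ), ∃ K₂ > (0 : ℝ),
      (∀ᶠ t in Filter.atTop, β₂ t ≤ K₁ * β₁ (C₁ * t)) ∧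
      (∀ᶠ t in Filter.atTop, β₁ t ≤ K₂ * β₂ (C₂ * t)) :=
  essential_rate_well_defined_general α hdiff c C T hc hcC hder β₁ β₂ hβ₁anti m M hm hmM hcomp
end

section
/- Let f : ℝ^d → ℝ be convex and differentiable, let x* ∈ ℝ^d be a minimizer of f with f* := f(x*), and let τ₀ > 0. Suppose X, Z : [τ₀, ∞) → ℝ^d are differentiable and satisfy X'(τ) = (Z(τ) − X(τ))/τ and Z'(τ) = −∇f(X(τ)) for all τ ≥ τ₀. Then the Lyapunov function E(τ) := τ·(f(X(τ)) − f*) + (1/2)·‖Z(τ) − x*‖² is nonincreasing on [τ₀, ∞); consequently f(X(τ)) − f* ≤ E(τ₀)/τ for all τ ≥ τ₀, i.e., f(X(τ)) − f* = O(1/τ). -/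
/-!
Differentiating along a trajectory, `τ · d/dτ f(X) = ⟪∇f(X), Z - X⟫` and
`d/dτ ½‖Z - x*‖² = -⟪∇f(X), Z - x*⟫`, so the `Z`-terms cancel and
`E' = f(X) - f* + ⟪∇f(X), x* - X⟫`, which is `≤ 0` by the first-order characterization of
convexity. Hence `E` is nonincreasing, and `τ (f(X τ) - f*) ≤ E(τ) ≤ E(τ₀)`.
-/

open Set
open scoped RealInnerProductSpace

theorem ConvexOn.apply_sub_le_sub_of_hasFDerivAt {E : Type*} [NormedAddCommGroup E]
    [NormedSpace ℝ E] {s : Set E} {f : E → ℝ} {f' : E →L[ℝ] ℝ} {x y : E}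
    (hf : ConvexOn ℝ s f) (hx : x ∈ s) (hy : y ∈ s) (hf' : HasFDerivAt f f' x) :
    f' (y - x) ≤ f y - f x := by
  have hline : ConvexOn ℝ (AffineMap.lineMap (k := ℝ) x y ⁻¹' s) (f ∘ AffineMap.lineMap x y) :=
    hf.comp_affineMap _
  have hderiv : HasDerivAt (f ∘ AffineMap.lineMap (k := ℝ) x y) (f' (y - x)) 0 := by
    refine hf'.comp_hasDerivAt_of_eq 0 AffineMap.hasDerivAt_lineMap ?_
    simp
  simpa [slope_def_field] using
    hline.le_slope_of_hasDerivAt (by simpa using hx) (by simpa using hy) one_pos hderiv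

section InnerProduct

variable {F : Type*} [NormedAddCommGroup F] [InnerProductSpace ℝ F] [CompleteSpace F]

theorem ConvexOn.inner_sub_le_sub_of_hasGradientAt {s : Set F} {f : F → ℝ} {g x y : F}
    (hf : ConvexOn ℝ s f) (hx : x ∈ s) (hy : y ∈ s) (hg : HasGradientAt f g x) :
    ⟪g, y - x⟫ ≤ f y - f x := by
  simpa using hf.apply_sub_le_sub_of_hasFDerivAt hx hy hg.hasFDerivAt

theorem HasGradientAt.comp_hasDerivAt {f : F → ℝ} {g : F} {γ : ℝ → F} {v : F} {t : ℝ}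
    (hf : HasGradientAt f g (γ t)) (hγ : HasDerivAt γ v t) :
    HasDerivAt (f ∘ γ) ⟪g, v⟫ t := by
  simpa using hf.hasFDerivAt.comp_hasDerivAt t hγ

end InnerProduct

section Lyapunov

variable {F : Type*} [NormedAddCommGroup F]

noncomputable def lyapunovEnergy (f : F → ℝ) (xstar : F) (X Z : ℝ → F) (τ : ℝ) : ℝ :=
  τ * (f (X τ) - f xstar) + (1 / 2) * ‖Z τ - xstar‖ ^ 2

variable {f : F → ℝ} {xstar : F} {X Z : ℝ → F}

theorem mul_sub_le_lyapunovEnergy (τ : ℝ) :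
    τ * (f (X τ) - f xstar) ≤ lyapunovEnergy f xstar X Z τ :=
  le_add_of_nonneg_right (by positivity)

variable [InnerProductSpace ℝ F] [CompleteSpace F]

theorem hasDerivAt_lyapunovEnergy {g : F} {τ : ℝ} (hτ : τ ≠ 0)
    (hX : HasDerivAt X (τ⁻¹ • (Z τ - X τ)) τ) (hZ : HasDerivAt Z (-g) τ)
    (hg : HasGradientAt f g (X τ)) :
    HasDerivAt (lyapunovEnergy f xstar X Z) (f (X τ) - f xstar + ⟪g, xstar - X τ⟫) τ := by
  have hfX := hg.comp_hasDerivAt hX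
  have hnorm := (hZ.sub_const xstar).norm_sq
  refine (((hasDerivAt_id τ).mul (hfX.sub_const (f xstar))).add
    (hnorm.const_mul (1 / 2))).congr_deriv ?_
  have hcancel : τ * ⟪g, τ⁻¹ • (Z τ - X τ)⟫ = ⟪g, Z τ - X τ⟫ := by
    rw [real_inner_smul_right, mul_inv_cancel_left₀ hτ]
  simp only [id, Function.comp, hcancel, inner_neg_right, inner_sub_right,
    real_inner_comm g]
  ring

theorem antitoneOn_lyapunovEnergy (hf : ConvexOn ℝ univ f) {τ₀ : ℝ} (hτ₀ : 0 < τ₀)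
    (hdiff : ∀ τ ∈ Ici τ₀, DifferentiableAt ℝ f (X τ))
    (hX : ∀ τ ∈ Ici τ₀, HasDerivAt X (τ⁻¹ • (Z τ - X τ)) τ)
    (hZ : ∀ τ ∈ Ici τ₀, HasDerivAt Z (-gradient f (X τ)) τ) :
    AntitoneOn (lyapunovEnergy f xstar X Z) (Ici τ₀) := by
  have hE : ∀ τ ∈ Ici τ₀, HasDerivAt (lyapunovEnergy f xstar X Z)
      (f (X τ) - f xstar + ⟪gradient f (X τ), xstar - X τ⟫) τ := fun τ hτ =>
    hasDerivAt_lyapunovEnergy (hτ₀.trans_le hτ).ne' (hX τ hτ) (hZ τ hτ)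
      (hdiff τ hτ).hasGradientAt
  refine antitoneOn_of_hasDerivWithinAt_nonpos (convex_Ici τ₀)
    (fun τ hτ => (hE τ hτ).continuousAt.continuousWithinAt)
    (fun τ hτ => (hE τ (interior_subset hτ)).hasDerivWithinAt) fun τ hτ => ?_
  have := hf.inner_sub_le_sub_of_hasGradientAt (mem_univ _) (mem_univ xstar)
    (hdiff τ (interior_subset hτ)).hasGradientAt
  linarith

end Lyapunov

theorem lyapunov_rate_first_order_system_general {d : ℕ}
    (f : EuclideanSpace ℝ (Fin d) → ℝ)
    (hconv : ConvexOn ℝ Set.univ f) (hdiff : Differentiable ℝ f)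
    (xstar : EuclideanSpace ℝ (Fin d))
    (τ₀ : ℝ) (hτ₀ : 0 < τ₀)
    (X Z : ℝ → EuclideanSpace ℝ (Fin d))
    (hX : ∀ τ ≥ τ₀, HasDerivAt X (τ⁻¹ • (Z τ - X τ)) τ)
    (hZ : ∀ τ ≥ τ₀, HasDerivAt Z (-(gradient f (X τ))) τ) :
    AntitoneOn (fun τ => τ * (f (X τ) - f xstar) + (1 / 2) * ‖Z τ - xstar‖ ^ 2)
        (Set.Ici τ₀) ∧
      ∀ τ ≥ τ₀, f (X τ) - f xstar ≤
        (τ₀ * (f (X τ₀) - f xstar) + (1 / 2) * ‖Z τ₀ - xstar‖ ^ 2) / τ := by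
  have hanti : AntitoneOn (lyapunovEnergy f xstar X Z) (Ici τ₀) :=
    antitoneOn_lyapunovEnergy hconv hτ₀ (fun τ _ => hdiff (X τ)) hX hZ
  refine ⟨hanti, fun τ hτ => ?_⟩
  rw [le_div_iff₀ (hτ₀.trans_le hτ), mul_comm]
  exact (mul_sub_le_lyapunovEnergy τ).trans (hanti self_mem_Ici hτ hτ)

/-- Lyapunov analysis for the system `Ẋ = (Z - X)/τ`, `Ż = -∇f(X)`: for convex
differentiable `f` with minimizer `x*`, the function
`E(τ) = τ (f(X τ) - f*) + ½‖Z τ - x*‖²` is nonincreasing on `[τ₀, ∞)`, and hence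
`f(X τ) - f* ≤ E(τ₀)/τ` for all `τ ≥ τ₀`, i.e. `f(X τ) - f* = O(1/τ)`. -/
theorem lyapunov_rate_first_order_system {d : ℕ}
    (f : EuclideanSpace ℝ (Fin d) → ℝ)
    (hconv : ConvexOn ℝ Set.univ f) (hdiff : Differentiable ℝ f)
    (xstar : EuclideanSpace ℝ (Fin d)) (hmin : ∀ x, f xstar ≤ f x)
    (τ₀ : ℝ) (hτ₀ : 0 < τ₀)
    (X Z : ℝ → EuclideanSpace ℝ (Fin d))
    (hX : ∀ τ ≥ τ₀, HasDerivAt X (τ⁻¹ • (Z τ - X τ)) τ)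
    (hZ : ∀ τ ≥ τ₀, HasDerivAt Z (-(gradient f (X τ))) τ) :
    AntitoneOn (fun τ => τ * (f (X τ) - f xstar) + (1 / 2) * ‖Z τ - xstar‖ ^ 2)
        (Set.Ici τ₀) ∧
      ∀ τ ≥ τ₀, f (X τ) - f xstar ≤
        (τ₀ * (f (X τ₀) - f xstar) + (1 / 2) * ‖Z τ₀ - xstar‖ ^ 2) / τ :=
  lyapunov_rate_first_order_system_general f hconv hdiff xstar τ₀ hτ₀ X Z hX hZ
end

section
/- Let f : ℝ^d → ℝ be convex and differentiable with minimizer x* and minimum value f*, let τ₀ > 0, and let X, Z : [τ₀, ∞) → ℝ^d be differentiable with X'(τ) = (Z(τ) − X(τ))/τ, Z'(τ) = −∇f(X(τ)), and f(X(τ)) − f* ≤ C/τ for all τ ≥ τ₀. Let η : [t₀, ∞) → ℝ be differentiable and monotonically increasing with e^{η(t₀)} ≥ τ₀, and set γ(t) := (d/dt) e^{η(t)}. Then x(t) := X(e^{η(t)}) and z(t) := Z(e^{η(t)}) satisfy x'(t) = (γ(t)/e^{η(t)})·(z(t) − x(t)) and z'(t) = −γ(t)·∇f(x(t)), and f(x(t))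 − f* ≤ C·e^{−η(t)} for all t ≥ t₀; i.e., f(x(t)) − f* = O(e^{−η(t)}). -/
theorem le_exp_of_monotoneOn_Ici {η : ℝ → ℝ} {t₀ t τ₀ : ℝ}
    (hη : MonotoneOn η (Set.Ici t₀)) (hη₀ : τ₀ ≤ Real.exp (η t₀)) (ht : t₀ ≤ t) :
    τ₀ ≤ Real.exp (η t) :=
  hη₀.trans (Real.exp_le_exp.mpr (hη Set.self_mem_Ici ht ht))

theorem HasDerivAt.comp_timeChange_inv_smul_sub {E : Type*} [NormedAddCommGroup E]
    [NormedSpace ℝ E] {X Z : ℝ → E} {T : ℝ → ℝ} {γ t : ℝ}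
    (hX : HasDerivAt X ((T t)⁻¹ • (Z (T t) - X (T t))) (T t)) (hT : HasDerivAt T γ t) :
    HasDerivAt (fun s => X (T s)) ((γ / T t) • (Z (T t) - X (T t))) t :=
  (hX.scomp t hT).congr_deriv (by rw [smul_smul, div_eq_mul_inv])

theorem time_rescaled_accelerated_system_general {d : ℕ}
    (f : EuclideanSpace ℝ (Fin d) → ℝ)
    (xstar : EuclideanSpace ℝ (Fin d))
    (τ₀ : ℝ)
    (X Z : ℝ → EuclideanSpace ℝ (Fin d))
    (hX : ∀ τ ≥ τ₀, HasDerivAt X (τ⁻¹ • (Z τ - X τ)) τ)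
    (hZ : ∀ τ ≥ τ₀, HasDerivAt Z (-(gradient f (X τ))) τ)
    (C : ℝ) (hrate : ∀ τ ≥ τ₀, f (X τ) - f xstar ≤ C / τ)
    (t₀ : ℝ) (η : ℝ → ℝ)
    (hηmono : MonotoneOn η (Set.Ici t₀))
    (hη₀ : τ₀ ≤ Real.exp (η t₀))
    (γ : ℝ → ℝ)
    (hγ : ∀ t ≥ t₀, HasDerivAt (fun s => Real.exp (η s)) (γ t) t) :
    ∀ t ≥ t₀,
      HasDerivAt (fun s => X (Real.exp (η s)))
        ((γ t / Real.exp (η t)) • (Z (Real.exp (η t)) - X (Real.exp (η t)))) t ∧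
      HasDerivAt (fun s => Z (Real.exp (η s)))
        (-γ t • gradient f (X (Real.exp (η t)))) t ∧
      f (X (Real.exp (η t))) - f xstar ≤ C * Real.exp (-η t) := by
  intro t ht
  have hτ : τ₀ ≤ Real.exp (η t) := le_exp_of_monotoneOn_Ici hηmono hη₀ ht
  refine ⟨(hX _ hτ).comp_timeChange_inv_smul_sub (T := fun s => Real.exp (η s)) (hγ t ht),
    ?_, ?_⟩
  · rw [neg_smul]
    exact ((hZ _ hτ).scomp t (hγ t ht)).congr_deriv (smul_neg _ _)
  · simpa only [Real.exp_neg, div_eq_mul_inv] using hrate _ hτ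

/-- Time rescaling `τ = e^{η(t)}` of the system `Ẋ = (Z - X)/τ`, `Ż = -∇f(X)` with rate
`O(1/τ)` yields the accelerated system of Wibisono et al.:
`x(t) := X(e^{η(t)})`, `z(t) := Z(e^{η(t)})` satisfy
`ẋ = (γ(t)/e^{η(t)})(z - x)`, `ż = -γ(t)∇f(x)` with `γ(t) = (d/dt)e^{η(t)}`, and
`f(x(t)) - f* ≤ C e^{-η(t)}`. -/
theorem time_rescaled_accelerated_system {d : ℕ}
    (f : EuclideanSpace ℝ (Fin d) → ℝ)
    (hconv : ConvexOn ℝ Set.univ f) (hdiff : Differentiable ℝ f)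
    (xstar : EuclideanSpace ℝ (Fin d)) (hmin : ∀ x, f xstar ≤ f x)
    (τ₀ : ℝ) (hτ₀ : 0 < τ₀)
    (X Z : ℝ → EuclideanSpace ℝ (Fin d))
    (hX : ∀ τ ≥ τ₀, HasDerivAt X (τ⁻¹ • (Z τ - X τ)) τ)
    (hZ : ∀ τ ≥ τ₀, HasDerivAt Z (-(gradient f (X τ))) τ)
    (C : ℝ) (hrate : ∀ τ ≥ τ₀, f (X τ) - f xstar ≤ C / τ)
    (t₀ : ℝ) (η : ℝ → ℝ)
    (hηdiff : ∀ t ≥ t₀, DifferentiableAt ℝ η t)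
    (hηmono : MonotoneOn η (Set.Ici t₀))
    (hη₀ : τ₀ ≤ Real.exp (η t₀))
    (γ : ℝ → ℝ)
    (hγ : ∀ t ≥ t₀, HasDerivAt (fun s => Real.exp (η s)) (γ t) t) :
    ∀ t ≥ t₀,
      HasDerivAt (fun s => X (Real.exp (η s)))
        ((γ t / Real.exp (η t)) • (Z (Real.exp (η t)) - X (Real.exp (η t)))) t ∧
      HasDerivAt (fun s => Z (Real.exp (η s)))
        (-γ t • gradient f (X (Real.exp (η t)))) t ∧
      f (X (Real.exp (η t))) - f xstar ≤ C * Real.exp (-η t) :=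
  time_rescaled_accelerated_system_general f xstar τ₀ X Z hX hZ C hrate t₀ η hηmono hη₀ γ hγ
end
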